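/- Fix r > 0 and θ ∈ ℝ, and let V be the 4×4 real matrix with rows (r,0,0,0), (0,1/r,0,0), (0,0,cos θ, sin θ), (0,0,−sin θ, cos θ). Then: (a) Vᵀ·Q_W·V = Q_W, i.e. V ∈ Aut(Q_W); and (b) for every nonzero b ∈ ℝ and every (x,y) ∈ ℝ², the ACC row vector of the circle scaled by r and rotated by θ satisfies w(b/r, r(x cos θ − y sin θ), r(x sin θ + y cos θ)) = w(b,x,y)·V, where w(b,x,y) = (b(x²+y²) − 1/b, b, bx, by). Thus the dilation z ↦ re^{iθ}z of the plane acts on augmented curvature-center coordinates by right multiplication by V. -/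

import Mathlib

/-!
`V` is the product of `diag(r, 1/r, 1, 1)` and a rotation of the last two coordinates. The first
factor preserves `Q_W` because `Q_W` only pairs the first two coordinates with each other, the second
because it is orthogonal on the last two. On ACC vectors the first factor realises `z ↦ r z` and the
second `z ↦ e^{iθ} z`, which fixes `b` and `|z|`.
-/

open Matrix Real

/-- The matrix of the Wilker quadratic form. -/
noncomputable def QW : Matrix (Fin 4) (Fin 4) ℝ :=
  !![0, -4, 0, 0; -4, 0, 0, 0; 0, 0, 2, 0; 0, 0, 0, 2]

/-- The augmented curvature-center coordinate (ACC) row vector of an oriented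
circle with nonzero signed curvature `b` and center `(x, y)`. -/
noncomputable def acc (b x y : ℝ) : Fin 4 → ℝ :=
  ![b * (x ^ 2 + y ^ 2) - 1 / b, b, b * x, b * y]

def PreservesForm {n R : Type*} [Fintype n] [CommSemiring R] (Q V : Matrix n n R) : Prop :=
  Vᵀ * Q * V = Q

theorem PreservesForm.mul {n R : Type*} [Fintype n] [CommSemiring R] {Q U V : Matrix n n R}
    (hU : PreservesForm Q U) (hV : PreservesForm Q V) : PreservesForm Q (U * V) :=
  calc (U * V)ᵀ * Q * (U * V) = Vᵀ * (Uᵀ * Q * U) * V := by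
        simp only [transpose_mul, Matrix.mul_assoc]
    _ = Q := by rw [hU, hV]

noncomputable def accScale (r : ℝ) : Matrix (Fin 4) (Fin 4) ℝ :=
  !![r, 0, 0, 0; 0, 1 / r, 0, 0; 0, 0, 1, 0; 0, 0, 0, 1]

noncomputable def accRotation (θ : ℝ) : Matrix (Fin 4) (Fin 4) ℝ :=
  !![1, 0, 0, 0; 0, 1, 0, 0; 0, 0, cos θ, sin θ; 0, 0, -sin θ, cos θ]

theorem accScale_mul_accRotation (r θ : ℝ) :
    accScale r * accRotation θ =
      !![r, 0, 0, 0; 0, 1 / r, 0, 0; 0, 0, cos θ, sin θ; 0, 0, -sin θ, cos θ] := by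
  ext i j
  fin_cases i <;> fin_cases j <;> simp [accScale, accRotation, mul_apply, Fin.sum_univ_four]

theorem preservesForm_QW_accScale {r : ℝ} (hr : r ≠ 0) : PreservesForm QW (accScale r) := by
  unfold PreservesForm
  ext i j
  fin_cases i <;> fin_cases j <;> simp [accScale, QW, mul_apply, Fin.sum_univ_four] <;> field_simp

theorem preservesForm_QW_accRotation (θ : ℝ) : PreservesForm QW (accRotation θ) := by
  unfold PreservesForm
  ext i j
  fin_cases i <;> fin_cases j <;> simp [accRotation, QW, mul_apply, Fin.sum_univ_four]
  all_goals first | ring1 | linear_combination 2 * sin_sq_add_cos_sq θ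

theorem acc_vecMul_accScale (b x y : ℝ) {r : ℝ} (hr : r ≠ 0) :
    vecMul (acc b x y) (accScale r) = acc (b / r) (r * x) (r * y) := by
  ext i
  fin_cases i <;> simp [acc, accScale, vecMul, dotProduct, Fin.sum_univ_four] <;> field_simp

theorem acc_vecMul_accRotation (b x y θ : ℝ) :
    vecMul (acc b x y) (accRotation θ) =
      acc b (x * cos θ - y * sin θ) (x * sin θ + y * cos θ) := by
  have hnorm : (x * cos θ - y * sin θ) ^ 2 + (x * sin θ + y * cos θ) ^ 2 = x ^ 2 + y ^ 2 := by
    linear_combination (x ^ 2 + y ^ 2) * sin_sq_add_cos_sq θ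
  ext i
  fin_cases i <;> simp [acc, accRotation, vecMul, dotProduct, Fin.sum_univ_four, hnorm] <;> ring

/-- The dilation `z ↦ r·e^{iθ}·z` of the plane (`r > 0`) acts on augmented
curvature-center coordinates by right multiplication by the matrix `V` below,
which lies in `Aut(Q_W)`. -/
theorem dilation_acts_on_acc (r θ : ℝ) (hr : 0 < r)
    (V : Matrix (Fin 4) (Fin 4) ℝ)
    (hV : V = !![r, 0, 0, 0;
                 0, 1 / r, 0, 0;
                 0, 0, Real.cos θ, Real.sin θ;
                 0, 0, -Real.sin θ, Real.cos θ]) :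
    Vᵀ * QW * V = QW ∧
    ∀ b x y : ℝ, b ≠ 0 →
      acc (b / r) (r * (x * Real.cos θ - y * Real.sin θ))
          (r * (x * Real.sin θ + y * Real.cos θ))
        = Matrix.vecMul (acc b x y) V := by
  rw [hV, ← accScale_mul_accRotation]
  refine ⟨(preservesForm_QW_accScale hr.ne').mul (preservesForm_QW_accRotation θ), ?_⟩
  intro b x y _
  rw [← vecMul_vecMul, acc_vecMul_accScale b x y hr.ne', acc_vecMul_accRotation]
  congr 1 <;> ring
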